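/- Let M, N be natural numbers with 1 ≤ N ≤ M. Then 4N/3 is the greatest element of the set {s ∈ ℝ : ∃ (x,y) ∈ C_DoF(M,N), s = x + y}. (This is the case 2M ≥ 2N of the total DoF of the MIMO X-channel with asymmetric output feedback and delayed CSIT, Table I.) -/

import Mathlib

/-- Sum DoF region of the (M,M,N,N) MIMO X-channel with asymmetric output feedback
and delayed CSIT, without security constraints (Theorem 4). -/
noncomputable def CDoF (M N : ℕ) : Set (ℝ × ℝ) :=
  {p | 0 ≤ p.1 ∧ 0 ≤ p.2 ∧
    p.1 / min (2 * (M : ℝ)) (2 * (N : ℝ)) + p.2 / min (2 * (M : ℝ)) (N : ℝ) ≤ 1 ∧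
    p.1 / min (2 * (M : ℝ)) (N : ℝ) + p.2 / min (2 * (M : ℝ)) (2 * (N : ℝ)) ≤ 1}

/-! Adding the two constraints `x/a + y/b ≤ 1` and `x/b + y/a ≤ 1` bounds `x + y` by the harmonic
mean `2ab/(a+b)` of `a` and `b`, and the diagonal point `x = y = ab/(a+b)` makes both tight.
For `N ≤ M` the DoF region is this region with `a = 2N`, `b = N`, whose harmonic mean is `4N/3`. -/

def swapRegion (a b : ℝ) : Set (ℝ × ℝ) :=
  {p | 0 ≤ p.1 ∧ 0 ≤ p.2 ∧ p.1 / a + p.2 / b ≤ 1 ∧ p.1 / b + p.2 / a ≤ 1}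

section swapRegion

variable {a b : ℝ}

lemma add_le_of_mem_swapRegion (ha : 0 < a) (hb : 0 < b) {p : ℝ × ℝ}
    (hp : p ∈ swapRegion a b) : p.1 + p.2 ≤ 2 * a * b / (a + b) := by
  obtain ⟨-, -, h₁, h₂⟩ := hp
  have hsum : (p.1 + p.2) * (a + b) / (a * b) ≤ 2 := by
    calc (p.1 + p.2) * (a + b) / (a * b) = (p.1 / a + p.2 / b) + (p.1 / b + p.2 / a) := by
          field_simp; ring
      _ ≤ 2 := by linarith
  rw [le_div_iff₀ (by positivity)]
  rw [div_le_iff₀ (by positivity)] at hsum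
  linarith

lemma diag_mem_swapRegion (ha : 0 < a) (hb : 0 < b) :
    (a * b / (a + b), a * b / (a + b)) ∈ swapRegion a b := by
  have hdiag : a * b / (a + b) / a + a * b / (a + b) / b = 1 := by
    field_simp; ring
  refine ⟨by positivity, by positivity, hdiag.le, ?_⟩
  linarith

lemma isGreatest_add_swapRegion (ha : 0 < a) (hb : 0 < b) :
    IsGreatest {s : ℝ | ∃ p ∈ swapRegion a b, s = p.1 + p.2} (2 * a * b / (a + b)) := by
  refine ⟨⟨_, diag_mem_swapRegion ha hb, ?_⟩, ?_⟩
  · ring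
  · rintro s ⟨p, hp, rfl⟩
    exact add_le_of_mem_swapRegion ha hb hp

end swapRegion

lemma CDoF_eq_swapRegion {M N : ℕ} (hNM : N ≤ M) :
    CDoF M N = swapRegion (2 * N) N := by
  have hNM' : (N : ℝ) ≤ M := by exact_mod_cast hNM
  rw [CDoF, min_eq_right (by linarith), min_eq_right (by linarith [N.cast_nonneg (α := ℝ)])]
  rfl

/-- For 1 ≤ N ≤ M, the maximal sum x + y over C_DoF(M,N) equals 4N/3. -/
theorem total_dof_case_high (M N : ℕ) (hN : 1 ≤ N) (hNM : N ≤ M) :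
    IsGreatest {s : ℝ | ∃ p ∈ CDoF M N, s = p.1 + p.2} (4 * (N : ℝ) / 3) := by
  have hN' : (0 : ℝ) < N := by exact_mod_cast hN
  have hmean : 4 * (N : ℝ) / 3 = 2 * (2 * N) * N / (2 * N + N) := by
    field_simp; ring
  rw [CDoF_eq_swapRegion hNM, hmean]
  exact isGreatest_add_swapRegion (by positivity) hN'
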